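/- arXiv:1705.08579 — 4 statements merged into one kernel-verified Lean document; each statement's English description precedes it below -/
import Mathlib

section
/- Let $V_1, \dots, V_p$ be finite-dimensional real vector spaces and $F : V_1 \times \dots \times V_p \to \mathbb{R}$ a smooth function. Then $F$ is multilinear if and only if (1) $F(\lambda v_1, \dots, \lambda v_p) = \lambda^p F(v_1, \dots, v_p)$ for all $\lambda \geq 0$, and (2) $F(v_1, \dots, v_{i-1}, 0, v_{i+1}, \dots, v_p) = 0$ for every $i$ and all $v_j$. -/
open Function Finset

section auxA

variable {E F' : Type*} [NormedAddCommGroup E] [NormedSpace ℝ E]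
  [NormedAddCommGroup F'] [NormedSpace ℝ F']

lemma aux_iFDW_eq {f : E → F'} {m : ℕ} (hf : ContDiff ℝ m f) {s : Set E}
    (hs : UniqueDiffOn ℝ s) {x : E} (hx : x ∈ s) :
    iteratedFDerivWithin ℝ m f s x = iteratedFDeriv ℝ m f x := by
  have h := ((hf.contDiffOn (s := Set.univ)).ftaylorSeriesWithin uniqueDiffOn_univ).mono
    (Set.subset_univ s)
  have h2 := h.eq_iteratedFDerivWithin_of_uniqueDiffOn le_rfl hs hx
  rw [← h2, ftaylorSeriesWithin_univ]
  rfl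

lemma aux_iDW_eq {f : ℝ → ℝ} {m : ℕ} (hf : ContDiff ℝ m f) {s : Set ℝ}
    (hs : UniqueDiffOn ℝ s) {x : ℝ} (hx : x ∈ s) :
    iteratedDerivWithin m f s x = iteratedDeriv m f x := by
  rw [iteratedDerivWithin_eq_iteratedFDerivWithin, iteratedDeriv_eq_iteratedFDeriv,
    aux_iFDW_eq hf hs hx]

end auxA

lemma keyA {p : ℕ} {V : Fin p → Type*} [∀ i, NormedAddCommGroup (V i)]
    [∀ i, NormedSpace ℝ (V i)]
    {F : (∀ i, V i) → ℝ} (hF : ContDiff ℝ (⊤ : ℕ∞) F)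
    (h1 : ∀ lam : ℝ, 0 ≤ lam → ∀ v : ∀ i, V i, F (fun i => lam • v i) = lam ^ p * F v)
    (v : ∀ i, V i) :
    (p.factorial : ℝ) * F v = iteratedFDeriv ℝ p F 0 (fun _ => v) := by
  set L : ℝ →L[ℝ] (∀ i, V i) := (ContinuousLinearMap.id ℝ ℝ).smulRight v with hL
  have hFp : ContDiff ℝ p F := hF.of_le (by exact_mod_cast le_top)
  have hφ : ContDiff ℝ p (F ∘ L) := hFp.comp L.contDiff
  have hψ : ContDiff ℝ p (fun t : ℝ => F v * t ^ p) :=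
    contDiff_const.mul (contDiff_id.pow p)
  have heq : Set.EqOn (F ∘ L) (fun t : ℝ => F v * t ^ p) (Set.Ici 0) := by
    intro t ht
    have h := h1 t ht v
    have : F (L t) = F (fun i => t • v i) := rfl
    simp only [Function.comp_apply, this, h, mul_comm]
  have hm0 : (0 : ℝ) ∈ Set.Ici (0 : ℝ) := Set.self_mem_Ici
  have e1 : iteratedDeriv p (F ∘ L) 0 = iteratedDeriv p (fun t : ℝ => F v * t ^ p) 0 := by
    rw [← aux_iDW_eq hφ (uniqueDiffOn_Ici 0) hm0, ← aux_iDW_eq hψ (uniqueDiffOn_Ici 0) hm0]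
    exact iteratedDerivWithin_congr heq hm0
  have e2 : iteratedDeriv p (fun t : ℝ => F v * t ^ p) 0 = (p.factorial : ℝ) * F v := by
    have hmul : iteratedDeriv p (fun t : ℝ => F v * t ^ p) 0 =
        F v * iteratedDeriv p (fun t : ℝ => t ^ p) 0 := by
      rw [← iteratedDerivWithin_univ, ← iteratedDerivWithin_univ]
      exact iteratedDerivWithin_const_mul (Set.mem_univ (0:ℝ)) uniqueDiffOn_univ (F v)
        ((contDiff_id.pow p).contDiffWithinAt)
    have hpow : iteratedDeriv p (fun t : ℝ => t ^ p) 0 = (p.factorial : ℝ) := by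
      have hnat : ∀ n : ℕ, ∏ i ∈ Finset.range n, (n - i) = n.factorial := by
        intro n
        induction n with
        | zero => simp
        | succ n ih =>
          rw [Finset.prod_range_succ']
          simp only [Nat.succ_sub_succ, Nat.sub_zero, ih]
          rw [Nat.factorial_succ, mul_comm]
      rw [iteratedDeriv_eq_iterate, iter_deriv_pow]
      simp only [Nat.sub_self, pow_zero, mul_one]
      calc ∏ i ∈ Finset.range p, ((p:ℝ) - (i:ℝ))
          = ∏ i ∈ Finset.range p, ((p - i : ℕ) : ℝ) := by
            refine Finset.prod_congr rfl fun i hi => ?_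
            have := Finset.mem_range.1 hi
            rw [Nat.cast_sub this.le]
        _ = ((∏ i ∈ Finset.range p, (p - i) : ℕ) : ℝ) := by rw [Nat.cast_prod]
        _ = (p.factorial : ℝ) := by rw [hnat]
    rw [hmul, hpow, mul_comm]
  have e3 : iteratedDeriv p (F ∘ L) 0 = iteratedFDeriv ℝ p F 0 (fun _ => v) := by
    rw [iteratedDeriv_eq_iteratedFDeriv, L.iteratedFDeriv_comp_right hFp 0 le_rfl]
    simp [L]
  rw [← e2, ← e1, e3]

/-- A smooth function on a product of finite-dimensional real vector spaces is
multilinear iff it is homogeneous of degree `p` under simultaneous nonnegative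
scaling and vanishes whenever one of its arguments is zero. -/
theorem stmt_0 {p : ℕ} (V : Fin p → Type*) [∀ i, NormedAddCommGroup (V i)]
    [∀ i, NormedSpace ℝ (V i)] [∀ i, FiniteDimensional ℝ (V i)]
    (F : (∀ i, V i) → ℝ) (hF : ContDiff ℝ (⊤ : ℕ∞) F) :
    (∃ m : MultilinearMap ℝ V ℝ, ∀ v, F v = m v) ↔
      ((∀ lam : ℝ, 0 ≤ lam → ∀ v : ∀ i, V i, F (fun i => lam • v i) = lam ^ p * F v) ∧
       (∀ (i : Fin p) (v : ∀ i, V i), F (Function.update v i 0) = 0)) := by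
  constructor
  · rintro ⟨m, hm⟩
    constructor
    · intro lam _ v
      rw [hm, hm]
      have h := m.map_smul_univ (fun _ => lam) v
      simp only [smul_eq_mul] at h
      rw [h, Finset.prod_const, Finset.card_univ, Fintype.card_fin]
    · intro i v
      rw [hm, m.map_update_zero]
  · rintro ⟨h1, h2⟩
    set B := iteratedFDeriv ℝ p F 0 with hB
    set T : (Fin p → Fin p) → (∀ i, V i) → ℝ :=
      fun f v => B fun k => Pi.single (f k) (v (f k)) with hT
    have key : ∀ v, (p.factorial : ℝ) * F v = ∑ σ : Equiv.Perm (Fin p), T σ v := by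
      intro v
      have S1 : ∑ S : Finset (Fin p), (-1 : ℝ) ^ (Sᶜ.card) *
          ((p.factorial : ℝ) * F (S.piecewise v 0)) = (p.factorial : ℝ) * F v := by
        rw [Fintype.sum_eq_single Finset.univ]
        · simp
        · intro S hS
          obtain ⟨i, hi⟩ : ∃ i, i ∉ S := by
            by_contra h
            push_neg at h
            exact hS (Finset.eq_univ_iff_forall.2 h)
          have hz : F (S.piecewise v 0) = 0 := by
            have h0 : (S.piecewise v 0) i = 0 := Finset.piecewise_eq_of_notMem _ _ _ hi
            have hupd : Function.update (S.piecewise v 0) i 0 = S.piecewise v 0 := by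
              conv_lhs => rw [← h0]
              exact Function.update_eq_self i _
            rw [← hupd]
            exact h2 i _
          rw [hz]; ring
      have S2 : ∀ S : Finset (Fin p), (p.factorial : ℝ) * F (S.piecewise v 0) =
          ∑ f : Fin p → Fin p, B fun k => Pi.single (f k) (S.piecewise v 0 (f k)) := by
        intro S
        set w := S.piecewise v 0 with hw'
        have hw : w = ∑ j, Pi.single j (w j) := by
          funext i
          simp [Finset.sum_apply, Fintype.sum_pi_single]
        rw [keyA hF h1 w]
        calc B (fun _ => w) = B.toMultilinearMap fun _ : Fin p => ∑ j, Pi.single j (w j) := by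
              rw [← hw]; rfl
          _ = ∑ f : Fin p → Fin p, B fun k => Pi.single (f k) (w (f k)) := by
              rw [B.toMultilinearMap.map_sum]
              rfl
      have S3 : ∀ (S : Finset (Fin p)) (f : Fin p → Fin p),
          (B fun k => Pi.single (f k) (S.piecewise v 0 (f k))) =
          if ∀ k, f k ∈ S then T f v else 0 := by
        intro S f
        by_cases hf : ∀ k, f k ∈ S
        · rw [if_pos hf]
          simp only [hT]
          congr 1
          funext k
          rw [Finset.piecewise_eq_of_mem _ _ _ (hf k)]
        · rw [if_neg hf]
          push_neg at hf
          obtain ⟨k, hk⟩ := hf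
          apply B.map_coord_zero k
          rw [Finset.piecewise_eq_of_notMem _ _ _ hk]
          simp
      have S5 : ∀ f : Fin p → Fin p,
          (∑ S : Finset (Fin p), (-1 : ℝ) ^ (Sᶜ.card) *
            (if ∀ k, f k ∈ S then T f v else 0)) =
          if Function.Surjective f then T f v else 0 := by
        intro f
        set R : Finset (Fin p) := Finset.image f Finset.univ with hR
        have hre : ∀ S : Finset (Fin p), (∀ k, f k ∈ S) ↔ R ⊆ S := by
          intro S
          rw [hR, Finset.image_subset_iff]
          simp
        have hbij : Function.Bijective (fun S : Finset (Fin p) => Sᶜ) :=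
          Function.Involutive.bijective fun S => compl_compl S
        have step1 : (∑ S : Finset (Fin p), (-1 : ℝ) ^ (Sᶜ.card) *
            (if ∀ k, f k ∈ S then T f v else 0)) =
            ∑ U : Finset (Fin p), (-1 : ℝ) ^ (U.card) *
              (if U ⊆ Rᶜ then T f v else 0) := by
          refine Fintype.sum_bijective _ hbij _ _ fun S => ?_
          have hiff : (∀ k, f k ∈ S) ↔ (Sᶜ ⊆ Rᶜ) := by
            rw [Finset.compl_subset_compl]
            exact hre S
          simp only [hiff]
        rw [step1]
        have step2 : (∑ U : Finset (Fin p), (-1 : ℝ) ^ (U.card) *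
            (if U ⊆ Rᶜ then T f v else 0)) =
            (∑ U ∈ (Rᶜ : Finset (Fin p)).powerset, (-1 : ℝ) ^ (U.card)) * T f v := by
          rw [Finset.sum_mul]
          rw [← Finset.sum_filter_add_sum_filter_not Finset.univ (fun U => U ⊆ Rᶜ)]
          have hpow : Finset.filter (fun U => U ⊆ Rᶜ) Finset.univ =
              (Rᶜ : Finset (Fin p)).powerset := by
            ext U
            simp [Finset.mem_powerset]
          rw [hpow]
          have hz : ∑ U ∈ Finset.filter (fun U => ¬ U ⊆ Rᶜ) Finset.univ,
              (-1 : ℝ) ^ (U.card) * (if U ⊆ Rᶜ then T f v else 0) = 0 := by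
            apply Finset.sum_eq_zero
            intro U hU
            rw [if_neg (Finset.mem_filter.1 hU).2, mul_zero]
          rw [hz, add_zero]
          refine Finset.sum_congr rfl fun U hU => ?_
          rw [if_pos (Finset.mem_powerset.1 hU)]
        rw [step2]
        have hsum : (∑ U ∈ (Rᶜ : Finset (Fin p)).powerset, (-1 : ℝ) ^ (U.card)) =
            if (Rᶜ : Finset (Fin p)) = ∅ then 1 else 0 := by
          have := Finset.sum_powerset_neg_one_pow_card (x := (Rᶜ : Finset (Fin p)))
          have h2 : ((∑ m ∈ (Rᶜ : Finset (Fin p)).powerset, (-1 : ℤ) ^ m.card : ℤ) : ℝ) =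
              ∑ U ∈ (Rᶜ : Finset (Fin p)).powerset, (-1 : ℝ) ^ (U.card) := by
            push_cast
            rfl
          rw [← h2, this]
          split <;> norm_num
        rw [hsum]
        have hsurj : ((Rᶜ : Finset (Fin p)) = ∅) ↔ Function.Surjective f := by
          rw [Finset.compl_eq_empty_iff, hR, Finset.eq_univ_iff_forall]
          constructor
          · intro h b
            obtain ⟨a, -, ha⟩ := Finset.mem_image.1 (h b)
            exact ⟨a, ha⟩
          · intro h b
            obtain ⟨a, ha⟩ := h b
            exact Finset.mem_image.2 ⟨a, Finset.mem_univ a, ha⟩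
        by_cases hs : Function.Surjective f
        · rw [if_pos (hsurj.2 hs), if_pos hs, one_mul]
        · rw [if_neg (fun h => hs (hsurj.1 h)), if_neg hs, zero_mul]
      have S6 : (∑ f : Fin p → Fin p, if Function.Surjective f then T f v else 0) =
          ∑ σ : Equiv.Perm (Fin p), T σ v := by
        rw [← Finset.sum_filter]
        refine (Finset.sum_bij (fun (σ : Equiv.Perm (Fin p)) _ => (σ : Fin p → Fin p))
          ?_ ?_ ?_ ?_).symm
        · intro σ _
          exact Finset.mem_filter.2 ⟨Finset.mem_univ _, σ.surjective⟩
        · intro σ₁ _ σ₂ _ h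
          exact Equiv.coe_fn_injective h
        · intro f hf
          have hs : Function.Surjective f := (Finset.mem_filter.1 hf).2
          have hb : Function.Bijective f := Finite.surjective_iff_bijective.1 hs
          exact ⟨Equiv.ofBijective f hb, Finset.mem_univ _, rfl⟩
        · intro σ _
          rfl
      calc (p.factorial : ℝ) * F v
          = ∑ S : Finset (Fin p), (-1 : ℝ) ^ (Sᶜ.card) *
              ((p.factorial : ℝ) * F (S.piecewise v 0)) := S1.symm
        _ = ∑ S : Finset (Fin p), ∑ f : Fin p → Fin p, (-1 : ℝ) ^ (Sᶜ.card) *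
              (if ∀ k, f k ∈ S then T f v else 0) := by
            refine Finset.sum_congr rfl fun S _ => ?_
            rw [S2 S, Finset.mul_sum]
            exact Finset.sum_congr rfl fun f _ => by rw [S3 S f]
        _ = ∑ f : Fin p → Fin p, ∑ S : Finset (Fin p), (-1 : ℝ) ^ (Sᶜ.card) *
              (if ∀ k, f k ∈ S then T f v else 0) := Finset.sum_comm
        _ = ∑ f : Fin p → Fin p, (if Function.Surjective f then T f v else 0) :=
            Finset.sum_congr rfl fun f _ => S5 f
        _ = ∑ σ : Equiv.Perm (Fin p), T σ v := S6
    refine ⟨(p.factorial : ℝ)⁻¹ • ∑ σ : Equiv.Perm (Fin p),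
      ((B.toMultilinearMap.domDomCongr σ).compLinearMap fun i => LinearMap.single ℝ V i),
      fun v => ?_⟩
    have hfac : (p.factorial : ℝ) ≠ 0 := Nat.cast_ne_zero.2 (Nat.factorial_ne_zero p)
    rw [MultilinearMap.smul_apply, MultilinearMap.sum_apply]
    have happ : ∀ σ : Equiv.Perm (Fin p),
        ((B.toMultilinearMap.domDomCongr σ).compLinearMap fun i => LinearMap.single ℝ V i) v
          = T σ v := fun σ => rfl
    rw [Finset.sum_congr rfl fun σ _ => happ σ, smul_eq_mul, ← key v]
    field_simp
end

section
/- Let $V$ and $W$ be finite-dimensional real vector spaces with $F : V \times W \to \mathbb{R}$ smooth, satisfying $F(\lambda v, \lambda w) = \lambda^2 F(v, w)$ for all $\lambda \geq 0$ and $F(v, 0) = F(0, w) = 0$ for all $v, w$. Then $F(0,0) = 0$ and the total derivative $DF(0,0) = 0$, and $F$ is bilinear. -/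
open Filter Set Topology

set_option maxHeartbeats 1000000 in
/-- A smooth function `F : V × W → ℝ` that is homogeneous of degree 2 under
simultaneous nonnegative scaling and vanishes when either argument is zero
satisfies `F(0,0) = 0`, `DF(0,0) = 0`, and is bilinear. -/
theorem stmt_1 {V W : Type*} [NormedAddCommGroup V] [NormedSpace ℝ V]
    [FiniteDimensional ℝ V] [NormedAddCommGroup W] [NormedSpace ℝ W]
    [FiniteDimensional ℝ W]
    (F : V × W → ℝ) (hF : ContDiff ℝ (⊤ : ℕ∞) F)
    (hhom : ∀ lam : ℝ, 0 ≤ lam → ∀ v w, F (lam • v, lam • w) = lam ^ 2 * F (v, w))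
    (hv : ∀ v, F (v, 0) = 0) (hw : ∀ w, F (0, w) = 0) :
    F (0, 0) = 0 ∧ fderiv ℝ F (0, 0) = 0 ∧
      ∃ b : V →ₗ[ℝ] W →ₗ[ℝ] ℝ, ∀ v w, F (v, w) = b v w := by
  have hFi : ContDiff ℝ (⊤ : ℕ∞) F := hF.of_le (by simp)
  have h1top : (1 : WithTop ℕ∞) ≤ (⊤ : ℕ∞) := by exact_mod_cast le_top
  have hdF : ContDiff ℝ (⊤ : ℕ∞) (fderiv ℝ F) := (contDiff_infty_iff_fderiv.mp hFi).2
  have key : ∀ x : V × W, fderiv ℝ F 0 x = 0 ∧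
      fderiv ℝ (fderiv ℝ F) 0 x x = 2 * F x := by
    intro x
    set g : ℝ → ℝ := fun t => F (t • x) with hg_def
    have hsm : ∀ t : ℝ, HasDerivAt (fun s : ℝ => s • x) x t := fun t => by
      simpa using (hasDerivAt_id t).smul_const x
    have hg : ContDiff ℝ (⊤ : ℕ∞) g := hFi.comp (contDiff_id.smul contDiff_const)
    have hgd : ∀ t : ℝ, HasDerivAt g (fderiv ℝ F (t • x) x) t := fun t =>
      ((hFi.differentiable (zero_lt_one.trans_le h1top).ne' (t • x)).hasFDerivAt).comp_hasDerivAt t (hsm t)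
    have hgt : ∀ t : ℝ, 0 ≤ t → g t = t ^ 2 * F x := by
      intro t ht
      obtain ⟨v, w⟩ := x
      exact hhom t ht v w
    have hderiv_pos : ∀ t ∈ Ioi (0:ℝ), deriv g t = 2 * t * F x := by
      intro t ht
      have hev : g =ᶠ[𝓝 t] fun s => s ^ 2 * F x := by
        filter_upwards [Ioi_mem_nhds ht] with s hs
        exact hgt s (le_of_lt hs)
      rw [hev.deriv_eq]
      simpa [mul_comm] using ((hasDerivAt_pow 2 t).mul_const (F x)).deriv
    have hcont1 : Continuous (deriv g) := (contDiff_infty_iff_deriv.mp hg).2.continuous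
    have h0 : deriv g 0 = 0 := by
      have h1 : Tendsto (deriv g) (𝓝[>] (0:ℝ)) (𝓝 (deriv g 0)) :=
        (hcont1.continuousAt).continuousWithinAt.tendsto
      have h2 : Tendsto (fun t : ℝ => 2 * t * F x) (𝓝[>] (0:ℝ)) (𝓝 (deriv g 0)) :=
        h1.congr' (eventually_nhdsWithin_of_forall hderiv_pos)
      have h3 : Tendsto (fun t : ℝ => 2 * t * F x) (𝓝[>] (0:ℝ)) (𝓝 0) := by
        have : Tendsto (fun t : ℝ => 2 * t * F x) (𝓝 (0:ℝ)) (𝓝 (2 * 0 * F x)) :=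
          Continuous.tendsto (by continuity) 0
        simpa using this.mono_left nhdsWithin_le_nhds
      exact (tendsto_nhds_unique h2 h3).symm ▸ rfl
    have hfd0 : fderiv ℝ F 0 x = 0 := by
      have := (hgd 0).deriv
      rw [zero_smul] at this
      rw [← this]
      exact tendsto_nhds_unique
        ((hcont1.continuousAt).continuousWithinAt.tendsto.congr'
          (eventually_nhdsWithin_of_forall hderiv_pos))
        (by
          have : Tendsto (fun t : ℝ => 2 * t * F x) (𝓝 (0:ℝ)) (𝓝 (2 * 0 * F x)) :=
            Continuous.tendsto (by continuity) 0
          simpa using this.mono_left nhdsWithin_le_nhds) |>.symm ▸ h0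
    refine ⟨hfd0, ?_⟩
    -- second derivative
    have hdg_eq : deriv g = fun t => fderiv ℝ F (t • x) x := funext fun t => (hgd t).deriv
    have hc : HasDerivAt (fun t : ℝ => fderiv ℝ F (t • x))
        (fderiv ℝ (fderiv ℝ F) 0 x) 0 := by
      have h := ((hdF.differentiable (zero_lt_one.trans_le h1top).ne' ((0:ℝ) • x)).hasFDerivAt).comp_hasDerivAt
        (0:ℝ) (hsm 0)
      rwa [zero_smul] at h
    have hdd : HasDerivAt (deriv g) (fderiv ℝ (fderiv ℝ F) 0 x x) 0 := by
      rw [hdg_eq]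
      have := hc.clm_apply (hasDerivAt_const (0:ℝ) x)
      simpa using this
    have hdd_pos : ∀ t ∈ Ioi (0:ℝ), deriv (deriv g) t = 2 * F x := by
      intro t ht
      have hev : deriv g =ᶠ[𝓝 t] fun s => 2 * s * F x := by
        filter_upwards [Ioi_mem_nhds ht] with s hs
        exact hderiv_pos s hs
      rw [hev.deriv_eq]
      have : HasDerivAt (fun s : ℝ => 2 * s * F x) (2 * F x) t := by
        simpa [mul_comm, mul_assoc] using
          (((hasDerivAt_id t).const_mul (2:ℝ)).mul_const (F x))
      exact this.deriv
    have hcont2 : Continuous (deriv (deriv g)) :=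
      (contDiff_infty_iff_deriv.mp (contDiff_infty_iff_deriv.mp hg).2).2.continuous
    have h20 : deriv (deriv g) 0 = 2 * F x := by
      have h1 : Tendsto (deriv (deriv g)) (𝓝[>] (0:ℝ)) (𝓝 (deriv (deriv g) 0)) :=
        (hcont2.continuousAt).continuousWithinAt.tendsto
      have h2 : Tendsto (fun _ : ℝ => 2 * F x) (𝓝[>] (0:ℝ)) (𝓝 (deriv (deriv g) 0)) :=
        h1.congr' (eventually_nhdsWithin_of_forall hdd_pos)
      exact tendsto_nhds_unique h2 tendsto_const_nhds
    rw [← hdd.deriv, h20]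
  set B := fderiv ℝ (fderiv ℝ F) 0 with hB
  have hsymm : ∀ a b : V × W, B a b = B b a := fun a b =>
    second_derivative_symmetric (fun y => (hFi.differentiable (zero_lt_one.trans_le h1top).ne' y).hasFDerivAt)
      ((hdF.differentiable (zero_lt_one.trans_le h1top).ne' 0).hasFDerivAt) a b
  have key2 : ∀ x : V × W, B x x = 2 * F x := fun x => (key x).2
  have key1 : fderiv ℝ F 0 = 0 := ContinuousLinearMap.ext fun x => by simpa using (key x).1
  clear_value B
  clear hB key hdF hFi hF
  have hFeq : ∀ v w, F (v, w) = B (v, 0) (0, w) := by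
    intro v w
    have h1 : B (v, w) (v, w) = 2 * F (v, w) := key2 (v, w)
    have hvv : B (v, 0) (v, 0) = 0 := by
      have := key2 (v, 0); rw [hv v] at this; linarith
    have hww : B (0, w) (0, w) = 0 := by
      have := key2 (0, w); rw [hw w] at this; linarith
    have hsplit : ((v, w) : V × W) = (v, 0) + (0, w) := by simp
    have hexp : B (v, w) (v, w)
        = B (v, 0) (v, 0) + B (0, w) (v, 0) + (B (v, 0) (0, w) + B (0, w) (0, w)) := by
      rw [hsplit]
      simp only [map_add, ContinuousLinearMap.add_apply]
    have hs := hsymm (0, w) (v, 0)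
    rw [hexp] at h1
    linarith
  refine ⟨hv 0, ?_, ?_⟩
  · exact key1
  · refine ⟨LinearMap.mk₂ ℝ (fun v w => B (v, 0) (0, w)) ?_ ?_ ?_ ?_, ?_⟩
    · intro v₁ v₂ w
      show B (v₁ + v₂, 0) (0, w) = B (v₁, 0) (0, w) + B (v₂, 0) (0, w)
      have : ((v₁ + v₂, 0) : V × W) = (v₁, 0) + (v₂, 0) := by simp
      rw [this, map_add, ContinuousLinearMap.add_apply]
    · intro c v w
      show B (c • v, 0) (0, w) = c • B (v, 0) (0, w)
      have : ((c • v, 0) : V × W) = c • (v, 0) := by simp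
      rw [this, map_smul]; rfl
    · intro v w₁ w₂
      show B (v, 0) (0, w₁ + w₂) = B (v, 0) (0, w₁) + B (v, 0) (0, w₂)
      have : ((0, w₁ + w₂) : V × W) = (0, w₁) + (0, w₂) := by simp
      rw [this, map_add]
    · intro c v w
      show B (v, 0) (0, c • w) = c • B (v, 0) (0, w)
      have : ((0, c • w) : V × W) = c • (0, w) := by simp
      rw [this, map_smul]
    · intro v w
      exact hFeq v w
end

section
/- Let $A$ be a Lie algebroid over $M$ and $(D, l, r)$ an IM $(0,p)$-tensor on $A$ (so $D : \Gamma(A) \to \Omega^p(M)$, $l : A \to \wedge^{p-1}T^*M$ with Leibniz rule $D(fa) = fD(a) + df \wedge l(a)$). Setting $\mu(a) = l(a)$ and $\nu(a) = D(a) - d\mu(a)$, the pair $(\mu, \nu)$ is an IM $p$-form on $A$: in particular $\nu$ is $C^\infty(M)$-linear, and the equations $\nu([a,b]) = \mathcal{L}_{\rho(a)}\nu(b) - i_{\rho(b)}d\nu(a)$ and $\mu([a,b]) = \mathcal{L}_{\rho(a)}\mu(b) - i_{\rho(b)}(d\mu(a) + \nu(a))$ hold. -/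
/-- From an IM `(0,p)`-tensor `(D, l)` on a Lie algebroid `A`, the pair
`(μ, ν)` with `μ(a) = l(a)` and `ν(a) = D(a) - dμ(a)` is an IM `p`-form:
`ν` is `C^∞(M)`-linear, and
`ν⁅a,b⁆ = 𝓛_{ρ(a)}ν(b) - i_{ρ(b)}dν(a)` and
`μ⁅a,b⁆ = 𝓛_{ρ(a)}μ(b) - i_{ρ(b)}(dμ(a) + ν(a))` hold.
(Abstract Cartan-calculus form: `R = C^∞(M)`, `L = Γ(A)` with anchor
`ρ : L → 𝔛(M)`, `Ωk` the modules of `k`-forms, `wf f η = df ∧ η`.) -/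
theorem stmt_13 {R : Type*} [CommRing R] [Algebra ℝ R]
    {L X : Type*} [LieRing L] [LieAlgebra ℝ L] [Module R L]
    {Ωpm2 Ωpm1 Ωp Ωp1 : Type*}
    [AddCommGroup Ωpm2] [Module R Ωpm2] [AddCommGroup Ωpm1] [Module R Ωpm1]
    [AddCommGroup Ωp] [Module R Ωp] [AddCommGroup Ωp1] [Module R Ωp1]
    (ρ : L → X)
    (wf : R → Ωpm1 → Ωp)                                   -- df ∧ ·
    (dm : Ωpm1 → Ωp) (dp : Ωp → Ωp1)
    (iPm : X → Ωpm1 → Ωpm2) (iP : X → Ωp → Ωpm1) (iP1 : X → Ωp1 → Ωp)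
    (Lm : X → Ωpm1 → Ωpm1) (Lp : X → Ωp → Ωp)
    (D : L → Ωp) (l : L →ₗ[R] Ωpm1)
    (hDadd : ∀ a b : L, D (a + b) = D a + D b)
    (hLeib : ∀ (f : R) (a : L), D (f • a) = f • D a + wf f (l a))
    (hIM1 : ∀ a b : L, D ⁅a, b⁆ = Lp (ρ a) (D b) - Lp (ρ b) (D a))
    (hIM2 : ∀ a b : L, l ⁅a, b⁆ = Lm (ρ a) (l b) - iP (ρ b) (D a))
    (hIM3 : ∀ a b : L, iPm (ρ a) (l b) = - iPm (ρ b) (l a))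
    -- Cartan calculus
    (hdLeib : ∀ (f : R) (η : Ωpm1), dm (f • η) = f • dm η + wf f η)
    (hdadd : ∀ η ζ : Ωpm1, dm (η + ζ) = dm η + dm ζ)
    (hdpadd : ∀ ω ζ : Ωp, dp (ω + ζ) = dp ω + dp ζ)
    (hdpneg : ∀ ω : Ωp, dp (-ω) = - dp ω)
    (hLpadd : ∀ (x : X) (ω ζ : Ωp), Lp x (ω + ζ) = Lp x ω + Lp x ζ)
    (hiP1add : ∀ (x : X) (ω ζ : Ωp1), iP1 x (ω + ζ) = iP1 x ω + iP1 x ζ)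
    (hmagic : ∀ (x : X) (ω : Ωp), Lp x ω = iP1 x (dp ω) + dm (iP x ω))
    (hcomm : ∀ (x : X) (η : Ωpm1), Lp x (dm η) = dm (Lm x η))
    (hd2 : ∀ η : Ωpm1, dp (dm η) = 0) :
    ((∀ (f : R) (a : L), D (f • a) - dm (l (f • a)) = f • (D a - dm (l a))) ∧
     (∀ a b : L,
        D (a + b) - dm (l (a + b)) = (D a - dm (l a)) + (D b - dm (l b)))) ∧
    (∀ a b : L,
      D ⁅a, b⁆ - dm (l ⁅a, b⁆) =
        Lp (ρ a) (D b - dm (l b)) - iP1 (ρ b) (dp (D a - dm (l a)))) ∧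
    (∀ a b : L,
      l ⁅a, b⁆ = Lm (ρ a) (l b) - iP (ρ b) (dm (l a) + (D a - dm (l a)))) := by
  have dm_sub : ∀ x y, dm (x - y) = dm x - dm y :=
    (AddMonoidHom.mk' dm hdadd).map_sub
  have dp_sub : ∀ x y, dp (x - y) = dp x - dp y :=
    (AddMonoidHom.mk' dp hdpadd).map_sub
  have Lp_sub : ∀ (x : X) (ω ζ : Ωp), Lp x (ω - ζ) = Lp x ω - Lp x ζ :=
    fun x => (AddMonoidHom.mk' (Lp x) (hLpadd x)).map_sub
  refine ⟨⟨?_, ?_⟩, ?_, ?_⟩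
  · intro f a
    rw [hLeib, map_smul, hdLeib, smul_sub]
    abel
  · intro a b
    rw [hDadd, map_add, hdadd]
    abel
  · intro a b
    rw [hIM1, hIM2, dm_sub, Lp_sub, dp_sub, hd2, sub_zero,
        hmagic (ρ b) (D a), hcomm]
    abel
  · intro a b
    rw [add_sub_cancel, hIM2]
end

section
/- Let $A$ and $B$ be Lie algebra objects forming a matched pair, i.e., $A$ acts on $B$ and $B$ acts on $A$ by representations $\nabla$ satisfying the matched pair equations. Then the bracket on $A \oplus B$ defined by $[(a_1, b_1), (a_2, b_2)] = ([a_1, a_2] + \nabla_{b_1} a_2 - \nabla_{b_2} a_1,\ [b_1, b_2] + \nabla_{a_1} b_2 - \nabla_{a_2} b_1)$ satisfies the Jacobi identity, making $A \oplus B$ a Lie algebra containing $A$ and $B$ as subalgebras. -/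
lemma skw {L : Type*} [LieRing L] (x y : L) : ⁅x, y⁆ = -⁅y, x⁆ := by
  rw [← lie_skew]

lemma jacL {L : Type*} [LieRing L] (x y z : L) :
    ⁅⁅x, y⁆, z⁆ + (⁅⁅z, x⁆, y⁆ + ⁅⁅y, z⁆, x⁆) = 0 := by
  rw [skw ⁅x,y⁆ z, skw ⁅z,x⁆ y, skw ⁅y,z⁆ x, ← neg_add, ← neg_add,
    neg_eq_zero, ← lie_jacobi x y z]
  abel

lemma jac3 {L : Type*} [LieRing L] (x y z : L) :
    ⁅z, ⁅x, y⁆⁆ = -(⁅x, ⁅y, z⁆⁆ + ⁅y, ⁅z, x⁆⁆) := by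
  apply eq_neg_of_add_eq_zero_left
  rw [← lie_jacobi x y z]; abel

/-- The bracket on `A ⊕ B` determined by a matched pair of Lie algebras:
`[(a₁,b₁),(a₂,b₂)] = ([a₁,a₂] + ∇_{b₁}a₂ - ∇_{b₂}a₁, [b₁,b₂] + ∇_{a₁}b₂ - ∇_{a₂}b₁)`. -/
def matchedBracket {A B : Type*} [LieRing A] [LieAlgebra ℝ A]
    [LieRing B] [LieAlgebra ℝ B]
    (na : A →ₗ[ℝ] B →ₗ[ℝ] B) (nb : B →ₗ[ℝ] A →ₗ[ℝ] A)
    (x y : A × B) : A × B :=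
  (⁅x.1, y.1⁆ + nb x.2 y.1 - nb y.2 x.1, ⁅x.2, y.2⁆ + na x.1 y.2 - na y.1 x.2)

/-- For a matched pair of Lie algebras `(A, B)` (mutual representations
satisfying the matched pair equations), the bracket on `A ⊕ B` satisfies the
Jacobi identity, is antisymmetric, and contains `A` and `B` as subalgebras. -/
theorem stmt_17 {A B : Type*} [LieRing A] [LieAlgebra ℝ A]
    [LieRing B] [LieAlgebra ℝ B]
    (na : A →ₗ[ℝ] B →ₗ[ℝ] B) (nb : B →ₗ[ℝ] A →ₗ[ℝ] A)
    (hrepa : ∀ (a1 a2 : A) (b : B),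
      na ⁅a1, a2⁆ b = na a1 (na a2 b) - na a2 (na a1 b))
    (hrepb : ∀ (b1 b2 : B) (a : A),
      nb ⁅b1, b2⁆ a = nb b1 (nb b2 a) - nb b2 (nb b1 a))
    (hmatch1 : ∀ (a : A) (b1 b2 : B),
      na a ⁅b1, b2⁆ = ⁅na a b1, b2⁆ + ⁅b1, na a b2⁆
        + na (nb b2 a) b1 - na (nb b1 a) b2)
    (hmatch2 : ∀ (b : B) (a1 a2 : A),
      nb b ⁅a1, a2⁆ = ⁅nb b a1, a2⁆ + ⁅a1, nb b a2⁆
        + nb (na a2 b) a1 - nb (na a1 b) a2) :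
    (∀ x y z : A × B,
      matchedBracket na nb (matchedBracket na nb x y) z
        + matchedBracket na nb (matchedBracket na nb y z) x
        + matchedBracket na nb (matchedBracket na nb z x) y = 0) ∧
    (∀ x y : A × B, matchedBracket na nb x y = - matchedBracket na nb y x) ∧
    (∀ a1 a2 : A, matchedBracket na nb (a1, 0) (a2, 0) = (⁅a1, a2⁆, 0)) ∧
    (∀ b1 b2 : B, matchedBracket na nb (0, b1) (0, b2) = (0, ⁅b1, b2⁆)) := by
  refine ⟨?_, ?_, ?_, ?_⟩
  · rintro ⟨a1,b1⟩ ⟨a2,b2⟩ ⟨a3,b3⟩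
    simp only [matchedBracket, Prod.mk_add_mk, Prod.mk_eq_zero, map_add, map_sub,
      LinearMap.add_apply, LinearMap.sub_apply, add_lie, sub_lie, lie_add, lie_sub,
      hrepa, hrepb, hmatch1, hmatch2, lie_lie, Prod.ext_iff]
    constructor
    · rw [skw a2 ⁅a1,a3⁆, skw a3 ⁅a2,a1⁆, skw a1 ⁅a3,a2⁆, jac3 a1 a2 a3,
        skw a3 (nb b2 a1), skw a1 (nb b3 a2), skw a2 (nb b1 a3)]
      abel_nf
      exact jacL a1 a3 a2
    · rw [skw b2 ⁅b1,b3⁆, skw b3 ⁅b2,b1⁆, skw b1 ⁅b3,b2⁆, jac3 b1 b2 b3,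
        skw b3 (na a2 b1), skw b1 (na a3 b2), skw b2 (na a1 b3)]
      abel_nf
      exact jacL b1 b3 b2
  · rintro ⟨a1,b1⟩ ⟨a2,b2⟩
    simp only [matchedBracket, Prod.neg_mk, Prod.ext_iff]
    constructor
    · rw [skw a1 a2]; abel
    · rw [skw b1 b2]; abel
  · intro a1 a2
    simp [matchedBracket]
  · intro b1 b2
    simp [matchedBracket]
end
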